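/- Let τ be a path crossing the box I×J, let I' ⊆ I be an interval of width w with μ(J) ≥ w. Then there exists an interval J^1 with μ(J^1) = μ(I') such that ncost(I'×J^1) ≤ 2·ncost(τ_{I'}) and I'×J^1 (1 - ncost(τ_{I'}))-covers τ. -/

import Mathlib

open List

/-- Cost structure for the Levenshtein distance (formerly in Mathlib). -/
structure Levenshtein.Cost (α β δ : Type*) where
  delete : α → δ
  insert : β → δ
  substitute : α → β → δ

/-- Weighted cost (formerly in Mathlib). -/
def Levenshtein.weightCost {α δ : Type*} [Zero δ] (delete insert substitute : δ) [DecidableEq α] :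
    Levenshtein.Cost α α δ where
  delete _ := delete
  insert _ := insert
  substitute a b := if a = b then 0 else substitute

/-- Unit cost (formerly in Mathlib). -/
def Levenshtein.defaultCost {α : Type*} [DecidableEq α] : Levenshtein.Cost α α ℕ :=
  Levenshtein.weightCost 1 1 1

/-- Auxiliary step of the Levenshtein dynamic program (formerly in Mathlib). -/
def Levenshtein.impl {α β δ : Type*} [AddZeroClass δ] [Min δ] (C : Levenshtein.Cost α β δ)
    (xs : List α) (y : β) (d : {r : List δ // 0 < r.length}) : {r : List δ // 0 < r.length} :=
  let ⟨ds, w⟩ := d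
  xs.zip (ds.zip ds.tail) |>.foldr
    (init := ⟨[ds.getLast (List.ne_nil_of_length_pos w) + C.insert y], by simp⟩)
    (fun ⟨x, d₀, d₁⟩ ⟨r, w⟩ =>
      ⟨min (C.delete x + r[0]) (min (C.insert y + d₀) (C.substitute x y + d₁)) :: r, by simp⟩)

/-- Levenshtein distances of all suffixes (formerly in Mathlib). -/
def suffixLevenshtein {α β δ : Type*} [AddZeroClass δ] [Min δ] (C : Levenshtein.Cost α β δ)
    (xs : List α) (ys : List β) : {r : List δ // 0 < r.length} :=
  ys.foldr
    (Levenshtein.impl C xs)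
    (xs.foldr (init := ⟨[0], by simp⟩) (fun a ⟨r, w⟩ => ⟨(C.delete a + r[0]) :: r, by simp⟩))

/-- Levenshtein distance (formerly in Mathlib). -/
def levenshtein {α β δ : Type*} [AddZeroClass δ] [Min δ] (C : Levenshtein.Cost α β δ)
    (xs : List α) (ys : List β) : δ :=
  let ⟨r, _⟩ := suffixLevenshtein C xs ys
  r[0]

/-- Edit distance between two lists (Levenshtein distance with unit costs). -/
def edist {α : Type*} [DecidableEq α] (x y : List α) : ℕ :=
  levenshtein Levenshtein.defaultCost x y

/-- The substring of `x` indexed by the interval `I = {I.1, ..., I.2}` minus its minimum,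
i.e. the characters `x_{I.1+1}, ..., x_{I.2}` (1-indexed). -/
def sub {α : Type*} (x : List α) (I : ℕ × ℕ) : List α :=
  (x.drop I.1).take (I.2 - I.1)

/-- A single step in a grid graph: horizontal, vertical, or diagonal. -/
def IsStep (p q : ℕ × ℕ) : Prop :=
  q = (p.1 + 1, p.2) ∨ q = (p.1, p.2 + 1) ∨ q = (p.1 + 1, p.2 + 1)

/-- Cost of a step in the grid graph `G_{x,y}`: H- and V-steps cost 1, a D-step from `p`
costs 0 iff `x_{p.1+1} = y_{p.2+1}`. -/
def stepCost {α : Type*} [DecidableEq α] (x y : List α) (p q : ℕ × ℕ) : ℕ :=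
  if q = (p.1 + 1, p.2 + 1) then (if x[p.1]? = y[p.2]? then 0 else 1) else 1

/-- Cost of a path (list of vertices) in `G_{x,y}`. -/
def pathCost {α : Type*} [DecidableEq α] (x y : List α) (τ : List (ℕ × ℕ)) : ℕ :=
  ((τ.zip τ.tail).map (fun e => stepCost x y e.1 e.2)).sum

def IsPath (τ : List (ℕ × ℕ)) : Prop := τ.Chain' IsStep

def IsPathFrom (τ : List (ℕ × ℕ)) (a b : ℕ × ℕ) : Prop :=
  IsPath τ ∧ τ.head? = some a ∧ τ.getLast? = some b

/-- Minimum cost of a corner-to-corner path in the box `I × J` of `G_{x,y}`. -/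
noncomputable def boxCost {α : Type*} [DecidableEq α] (x y : List α) (I J : ℕ × ℕ) : ℕ :=
  sInf {c | ∃ τ, IsPathFrom τ (I.1, J.1) (I.2, J.2) ∧ pathCost x y τ = c}

/-- A path crosses the box `I × J`: all its vertices lie in the box and its horizontal
projection is exactly `I`. -/
def Crosses (τ : List (ℕ × ℕ)) (I J : ℕ × ℕ) : Prop :=
  IsPath τ ∧ τ ≠ [] ∧
  (∀ v ∈ τ, I.1 ≤ v.1 ∧ v.1 ≤ I.2 ∧ J.1 ≤ v.2 ∧ v.2 ≤ J.2) ∧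
  τ.head?.map Prod.fst = some I.1 ∧ τ.getLast?.map Prod.fst = some I.2

/-- `σ` is the minimal subpath `τ_I` of `τ` whose horizontal projection is `I`. -/
def IsCrossSubpath (τ σ : List (ℕ × ℕ)) (I : ℕ × ℕ) : Prop :=
  σ <:+: τ ∧ σ ≠ [] ∧
  (∀ v ∈ σ, I.1 ≤ v.1 ∧ v.1 ≤ I.2) ∧
  σ.head?.map Prod.fst = some I.1 ∧ σ.getLast?.map Prod.fst = some I.2 ∧
  (∀ v ∈ σ.tail, v.1 ≠ I.1) ∧ (∀ v ∈ σ.dropLast, v.1 ≠ I.2)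

/-- The box `I × J` `(1-δ)`-covers a path whose relevant subpath is `σ`: the start (end)
vertex of `σ` is within `δ·μ(I)` vertical units of the lower-left (upper-right) corner. -/
def CoversAt (δ : ℚ) (I J : ℕ × ℕ) (σ : List (ℕ × ℕ)) : Prop :=
  ∃ s e : ℕ × ℕ, σ.head? = some s ∧ σ.getLast? = some e ∧
    |(s.2 : ℚ) - (J.1 : ℚ)| ≤ δ * ((I.2 : ℚ) - (I.1 : ℚ)) ∧
    |(e.2 : ℚ) - (J.2 : ℚ)| ≤ δ * ((I.2 : ℚ) - (I.1 : ℚ))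

/-!
Take `J¹ = [s₂, s₂ + w]`, where `s` is the start of `σ = τ_{I'}` and `c = cost σ`. Every H- or
V-step costs one, so the end `e` of `σ` lies within `c` of the diagonal through `s`: this is the
covering bound. Clamping `σ` at height `s₂ + w` and closing it with a vertical segment gives a
corner-to-corner path of `I' × J¹` costing at most `c + |e₂ - (s₂ + w)| ≤ 2c`.
-/

section GridPaths

variable {α : Type*} [DecidableEq α] (x y : List α)

lemma stepCost_of_ne_diag {p q : ℕ × ℕ} (h : q ≠ (p.1 + 1, p.2 + 1)) : stepCost x y p q = 1 :=
  if_neg h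

lemma pathCost_singleton (a : ℕ × ℕ) : pathCost x y [a] = 0 := by
  simp [pathCost]

lemma pathCost_cons_cons (a b : ℕ × ℕ) (l : List (ℕ × ℕ)) :
    pathCost x y (a :: b :: l) = stepCost x y a b + pathCost x y (b :: l) := by
  simp [pathCost]

variable {x y}

lemma IsPathFrom.exists_eq_cons {l : List (ℕ × ℕ)} {a b : ℕ × ℕ} (h : IsPathFrom l a b) :
    ∃ t, l = a :: t := by
  obtain ⟨-, hhead, -⟩ := h
  cases l with
  | nil => simp at hhead
  | cons c t => exact ⟨t, by simpa using hhead⟩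

lemma isPathFrom_singleton (a : ℕ × ℕ) : IsPathFrom [a] a a :=
  ⟨List.isChain_singleton a, rfl, rfl⟩

lemma IsPathFrom.cons {l : List (ℕ × ℕ)} {a b c : ℕ × ℕ} (hab : IsStep a b)
    (h : IsPathFrom l b c) : IsPathFrom (a :: l) a c := by
  obtain ⟨t, rfl⟩ := h.exists_eq_cons
  obtain ⟨hpath, -, hlast⟩ := h
  exact ⟨List.isChain_cons_cons.mpr ⟨hab, hpath⟩, rfl, by rwa [List.getLast?_cons_cons]⟩

lemma IsPathFrom.pathCost_cons {l : List (ℕ × ℕ)} {b c : ℕ × ℕ} (h : IsPathFrom l b c)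
    (a : ℕ × ℕ) : pathCost x y (a :: l) = stepCost x y a b + pathCost x y l := by
  obtain ⟨t, rfl⟩ := h.exists_eq_cons
  exact pathCost_cons_cons x y a b t

lemma boxCost_le_pathCost {l : List (ℕ × ℕ)} {I J : ℕ × ℕ}
    (h : IsPathFrom l (I.1, J.1) (I.2, J.2)) : boxCost x y I J ≤ pathCost x y l :=
  Nat.sInf_le ⟨l, h, rfl⟩

@[elab_as_elim]
theorem IsPathFrom.induction_on {e : ℕ × ℕ} {motive : List (ℕ × ℕ) → ℕ × ℕ → Prop}
    {l : List (ℕ × ℕ)} {p : ℕ × ℕ} (h : IsPathFrom l p e) (single : motive [e] e)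
    (cons : ∀ a b l, IsStep a b → IsPathFrom l b e → motive l b → motive (a :: l) a) :
    motive l p := by
  obtain ⟨t, rfl⟩ := h.exists_eq_cons
  induction t generalizing p with
  | nil =>
    obtain rfl : p = e := by simpa using h.2.2
    exact single
  | cons q t ih =>
    obtain ⟨hpath, -, hlast⟩ := h
    obtain ⟨hstep, hpath⟩ := List.isChain_cons_cons.mp hpath
    have hq : IsPathFrom (q :: t) q e := ⟨hpath, rfl, by rwa [List.getLast?_cons_cons] at hlast⟩
    exact cons p q _ hstep hq (ih hq)

lemma exists_isPathFrom_vertical (a : ℕ × ℕ) (m : ℕ) :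
    ∃ l, IsPathFrom l a (a.1, a.2 + m) ∧ pathCost x y l = m := by
  induction m generalizing a with
  | zero => exact ⟨[a], isPathFrom_singleton a, pathCost_singleton x y a⟩
  | succ m ih =>
    obtain ⟨l, hl, hcost⟩ := ih (a.1, a.2 + 1)
    have hup : IsStep a (a.1, a.2 + 1) := Or.inr (Or.inl rfl)
    refine ⟨a :: l, ?_, ?_⟩
    · simpa [Nat.add_assoc, Nat.add_comm 1 m] using hl.cons hup
    · rw [hl.pathCost_cons, hcost, stepCost_of_ne_diag x y (by simp)]
      omega

-- A D-step keeps `v.2 - v.1` fixed; an H- or V-step changes it by one and costs one.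
theorem IsPathFrom.abs_sub_sub_le_pathCost {l : List (ℕ × ℕ)} {p e : ℕ × ℕ}
    (h : IsPathFrom l p e) :
    |((e.2 : ℤ) - p.2) - ((e.1 : ℤ) - p.1)| ≤ pathCost x y l := by
  refine h.induction_on (by simp [pathCost_singleton]) fun a b l hab hl ih => ?_
  rw [hl.pathCost_cons, abs_le] at *
  rcases hab with rfl | rfl | rfl
  · rw [stepCost_of_ne_diag x y (by simp)]
    omega
  · rw [stepCost_of_ne_diag x y (by simp)]
    omega
  · omega

/-- Clamping a path at height `K` (H- and D-steps above `K` become H-steps at height `K`,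
V-steps above `K` are dropped) and closing it with a vertical segment up to `K`. -/
theorem IsPathFrom.exists_clamp (K : ℕ) {l : List (ℕ × ℕ)} {p e : ℕ × ℕ}
    (h : IsPathFrom l p e) :
    ∃ l', IsPathFrom l' (p.1, min p.2 K) (e.1, K) ∧
      pathCost x y l' + (p.2 - K) ≤ pathCost x y l + (e.2 - K) + (K - e.2) := by
  refine h.induction_on ?_ fun a b l hab hl ih => ?_
  · obtain ⟨l', hl', hcost⟩ := exists_isPathFrom_vertical (x := x) (y := y)
      (e.1, min e.2 K) (K - min e.2 K)
    refine ⟨l', ?_, ?_⟩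
    · simpa [show min e.2 K + (K - min e.2 K) = K by omega] using hl'
    · rw [hcost, pathCost_singleton]
      omega
  · obtain ⟨l', hl', hcost⟩ := ih
    rw [hl.pathCost_cons]
    rcases hab with rfl | rfl | rfl <;> dsimp only at hl' hcost
    · refine ⟨(a.1, min a.2 K) :: l', hl'.cons (Or.inl rfl), ?_⟩
      rw [hl'.pathCost_cons, stepCost_of_ne_diag x y (by simp),
        stepCost_of_ne_diag x y (by simp)]
      omega
    · by_cases ha : a.2 < K
      · rw [show min (a.2 + 1) K = min a.2 K + 1 by omega] at hl'
        refine ⟨(a.1, min a.2 K) :: l', hl'.cons (Or.inr (Or.inl rfl)), ?_⟩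
        rw [hl'.pathCost_cons, stepCost_of_ne_diag x y (by simp),
          stepCost_of_ne_diag x y (by simp)]
        omega
      · refine ⟨l', by simpa [show min (a.2 + 1) K = min a.2 K by omega] using hl', ?_⟩
        rw [stepCost_of_ne_diag x y (by simp)]
        omega
    · by_cases ha : a.2 < K
      · rw [show min (a.2 + 1) K = a.2 + 1 by omega] at hl'
        refine ⟨a :: l', by simpa [ha.le] using hl'.cons (Or.inr (Or.inr rfl)), ?_⟩
        rw [hl'.pathCost_cons]
        omega
      · rw [show min (a.2 + 1) K = min a.2 K by omega] at hl'
        refine ⟨(a.1, min a.2 K) :: l', hl'.cons (Or.inl rfl), ?_⟩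
        rw [hl'.pathCost_cons, stepCost_of_ne_diag x y (by simp)]
        omega

lemma IsCrossSubpath.exists_isPathFrom {τ σ : List (ℕ × ℕ)} {I : ℕ × ℕ}
    (hσ : IsCrossSubpath τ σ I) (hτ : IsPath τ) :
    ∃ s e : ℕ × ℕ, IsPathFrom σ s e ∧ s.1 = I.1 ∧ e.1 = I.2 := by
  obtain ⟨hinf, -, -, hhead, hlast, -, -⟩ := hσ
  obtain ⟨s, hs, hs1⟩ := Option.map_eq_some_iff.mp hhead
  obtain ⟨e, he, he1⟩ := Option.map_eq_some_iff.mp hlast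
  exact ⟨s, e, ⟨hτ.infix hinf, hs, he⟩, hs1, he1⟩

end GridPaths

theorem stmt7_general {α : Type*} [DecidableEq α] (x y : List α) (τ σ : List (ℕ × ℕ))
    (I J I' : ℕ × ℕ) (w : ℕ) (hw : 0 < w)
    (hcross : Crosses τ I J)
    (hw' : I'.2 - I'.1 = w)
    (hσ : IsCrossSubpath τ σ I') :
    ∃ J1 : ℕ × ℕ, J1.2 - J1.1 = w ∧
      (boxCost x y I' J1 : ℚ) / (w : ℚ) ≤ 2 * ((pathCost x y σ : ℚ) / (w : ℚ)) ∧
      CoversAt ((pathCost x y σ : ℚ) / (w : ℚ)) I' J1 σ := by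
  obtain ⟨s, e, hσse, hs, he⟩ := hσ.exists_isPathFrom hcross.1
  obtain ⟨σ', hσ', hcost'⟩ := hσse.exists_clamp (x := x) (y := y) (s.2 + w)
  have hwidth : I'.2 = I'.1 + w := by omega
  have hend : |(e.2 : ℤ) - (s.2 + w)| ≤ pathCost x y σ := by
    have hrun : (e.1 : ℤ) - s.1 = w := by omega
    simpa [hrun, sub_sub] using hσse.abs_sub_sub_le_pathCost (x := x) (y := y)
  have hbox : boxCost x y I' (s.2, s.2 + w) ≤ 2 * pathCost x y σ := by
    have := boxCost_le_pathCost (x := x) (y := y) (I := I') (J := (s.2, s.2 + w))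
      (by simpa [hs, he] using hσ')
    rw [abs_le] at hend
    omega
  have hw₀ : (w : ℚ) ≠ 0 := by positivity
  have hwidthQ : (I'.2 : ℚ) - I'.1 = w := by
    rw [hwidth, Nat.cast_add, add_sub_cancel_left]
  refine ⟨(s.2, s.2 + w), by simp, ?_, s, e, hσse.2.1, hσse.2.2, ?_, ?_⟩
  · rw [← mul_div_assoc]
    gcongr
    exact_mod_cast hbox
  all_goals rw [hwidthQ, div_mul_cancel₀ _ hw₀]
  · simp
  · exact_mod_cast hend

/-- existence of a square interval J¹ with μ(J¹)=μ(I') such that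
ncost(I'×J¹) ≤ 2·ncost(τ_{I'}) and I'×J¹ (1-ncost(τ_{I'}))-covers τ. -/
theorem stmt7 {α : Type*} [DecidableEq α] (x y : List α) (τ σ : List (ℕ × ℕ))
    (I J I' : ℕ × ℕ) (w : ℕ) (hw : 0 < w)
    (hcross : Crosses τ I J)
    (hsub : I.1 ≤ I'.1 ∧ I'.2 ≤ I.2) (hw' : I'.2 - I'.1 = w)
    (hJw : w ≤ J.2 - J.1)
    (hσ : IsCrossSubpath τ σ I') :
    ∃ J1 : ℕ × ℕ, J1.2 - J1.1 = w ∧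
      (boxCost x y I' J1 : ℚ) / (w : ℚ) ≤ 2 * ((pathCost x y σ : ℚ) / (w : ℚ)) ∧
      CoversAt ((pathCost x y σ : ℚ) / (w : ℚ)) I' J1 σ :=
  stmt7_general x y τ σ I J I' w hw hcross hw' hσ
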